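/- arXiv:1005.3729 — 2 statements merged into one kernel-verified Lean document; each statement's English description precedes it below -/
import Mathlib

section
/- Let n ≥ 4 be even, let 1 ≤ k < n/2 be an integer, and let A be any real matrix with n columns whose null space equals the span of the all-ones vector 𝟙 ∈ ℝⁿ. Set C' = (n−k)/k and K = {1,…,k}. Let x ∈ ℝⁿ be the vector whose first n/2 entries are −1 and whose remaining entries are 0, and let x̂ ∈ ℝⁿ be the vector whose first n/2 entries are 0 and whose last n/2 entries are 1. Then: (i) x̂ is an ℓ1 minimizer for (A, x); (ii) the null space vector w = 𝟙 satisfies C'·‖w_K‖₁ = ‖w_K̄‖₁, so the condition C·‖w_K‖₁ ≤ ‖w_K̄‖₁ fails for every C > C'; (iii) ‖x − x̂‖₁ = (2(C'+1)/(C'−1))·‖x_K̄‖₁, and consequently ‖x − x̂‖₁ > (2(C+1)/(C−1))·‖x_K̄‖₁ for every C > C'. -/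
/-- The ℓ1 norm of a vector in ℝⁿ. -/
noncomputable def l1 {n : ℕ} (x : Fin n → ℝ) : ℝ := ∑ i, |x i|

/-- The restriction of a vector to the coordinates in `K` (zero outside `K`). -/
def restr {n : ℕ} (K : Finset (Fin n)) (x : Fin n → ℝ) : Fin n → ℝ :=
  fun i => if i ∈ K then x i else 0

/-!
Since the null space of `A` is spanned by `𝟙`, the vectors `z` with `A z = A x` are the shifts
`x + c 𝟙`, whose ℓ1 norm is `(n/2) (|c - 1| + |c|) ≥ n/2`, attained at `c = 1`, i.e. by `x̂`.
The rest is counting (`‖𝟙_K‖₁ = k`, `‖𝟙_K̄‖₁ = n - k`, `‖x_K̄‖₁ = n/2 - k`, `‖x - x̂‖₁ = n`) together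
with the fact that `C ↦ 2 (C + 1) / (C - 1)` is decreasing on `(1, ∞)`.
-/

open Finset

section L1

variable {n : ℕ}

def IsL1Minimizer {m : ℕ} (A : Matrix (Fin m) (Fin n) ℝ) (x xh : Fin n → ℝ) : Prop :=
  A.mulVec xh = A.mulVec x ∧ ∀ z : Fin n → ℝ, A.mulVec z = A.mulVec x → l1 xh ≤ l1 z

lemma l1_const (c : ℝ) : l1 (fun _ : Fin n => c) = n * |c| := by
  simp [l1]

lemma l1_restr (K : Finset (Fin n)) (x : Fin n → ℝ) :
    l1 (restr K x) = ∑ i ∈ K, |x i| := by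
  simp [l1, restr, apply_ite abs, sum_ite_mem]

lemma l1_restr_const (K : Finset (Fin n)) (c : ℝ) :
    l1 (restr K fun _ => c) = #K * |c| := by
  simp [l1_restr]

lemma l1_restr_compl_add_l1_restr (K : Finset (Fin n)) (x : Fin n → ℝ) :
    l1 (restr Kᶜ x) + l1 (restr K x) = l1 x := by
  rw [l1_restr, l1_restr, sum_compl_add_sum, l1]

lemma card_filter_val_lt_of_le {t : ℕ} (ht : t ≤ n) : #{i : Fin n | (i : ℕ) < t} = t := by
  rw [Fin.card_filter_val_lt]
  omega

lemma l1_ite_val_lt {t : ℕ} (ht : t ≤ n) (a b : ℝ) :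
    l1 (fun i : Fin n => if (i : ℕ) < t then a else b) = t * |a| + (n - t) * |b| := by
  have hcard_ge : #{i : Fin n | ¬ (i : ℕ) < t} = n - t := by
    rw [filter_not, card_sdiff_of_subset (filter_subset _ _), card_filter_val_lt_of_le ht,
      card_univ, Fintype.card_fin]
  simp only [l1, apply_ite abs, sum_ite, sum_const, nsmul_eq_mul, card_filter_val_lt_of_le ht,
    hcard_ge, Nat.cast_sub ht]

lemma l1_restr_compl_ite_val_lt {k t : ℕ} (hkt : k ≤ t) (ht : t ≤ n) :
    l1 (restr (univ.filter fun i : Fin n => (i : ℕ) < k)ᶜ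
      fun i => if (i : ℕ) < t then (-1 : ℝ) else 0) = t - k := by
  have hx_K : l1 (restr {i : Fin n | (i : ℕ) < k} fun i => if (i : ℕ) < t then (-1 : ℝ) else 0) =
      l1 (restr {i : Fin n | (i : ℕ) < k} fun _ => -1) := by
    rw [l1_restr, l1_restr]
    refine sum_congr rfl fun i hi => ?_
    rw [if_pos (by simp only [mem_filter] at hi; omega)]
  have := l1_restr_compl_add_l1_restr {i : Fin n | (i : ℕ) < k}
    fun i => if (i : ℕ) < t then (-1 : ℝ) else 0
  rw [hx_K, l1_restr_const, card_filter_val_lt_of_le (hkt.trans ht), l1_ite_val_lt ht] at this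
  simp only [abs_neg, abs_one, abs_zero, mul_one, mul_zero, add_zero] at this
  linarith

end L1

/-- The feasible points are exactly the shifts `x + c`. -/
lemma isL1Minimizer_add_const {m n : ℕ} {A : Matrix (Fin m) (Fin n) ℝ}
    (hnull : ∀ w : Fin n → ℝ, A.mulVec w = 0 ↔ ∃ c : ℝ, w = fun _ => c) {x : Fin n → ℝ}
    (c₀ : ℝ) (hmin : ∀ c : ℝ, l1 (x + fun _ => c₀) ≤ l1 (x + fun _ => c)) :
    IsL1Minimizer A x (x + fun _ => c₀) := by
  refine ⟨?_, fun z hz => ?_⟩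
  · rw [Matrix.mulVec_add, add_eq_left, hnull]
    exact ⟨c₀, rfl⟩
  · obtain ⟨c, hc⟩ := (hnull (z - x)).1 (by rw [Matrix.mulVec_sub, hz, sub_self])
    have hz' : z = x + fun _ => c := by rw [← hc]; abel
    exact hz' ▸ hmin c

/-- The shift by `c` costs `t |c - 1| + (n - t) |c| ≥ (n - t) (|c - 1| + |c|) ≥ n - t`. -/
lemma l1_add_one_le_l1_add_const {n t : ℕ} (ht : t ≤ n) (hnt : n ≤ 2 * t) (c : ℝ) :
    l1 ((fun i : Fin n => if (i : ℕ) < t then (-1 : ℝ) else 0) + fun _ => 1) ≤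
      l1 ((fun i : Fin n => if (i : ℕ) < t then (-1 : ℝ) else 0) + fun _ => c) := by
  have hshift : ∀ c : ℝ, ((fun i : Fin n => if (i : ℕ) < t then (-1 : ℝ) else 0) + fun _ => c) =
      fun i : Fin n => if (i : ℕ) < t then c - 1 else c := by
    intro c; ext i; split_ifs <;> simp [*, neg_add_eq_sub]
  have htri : 1 ≤ |c - 1| + |c| := by
    simpa [abs_sub_comm] using abs_add_le (1 - c) c
  have hnt' : (n : ℝ) ≤ 2 * t := by exact_mod_cast hnt
  have ht' : (t : ℝ) ≤ n := by exact_mod_cast ht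
  simp only [hshift, l1_ite_val_lt ht, sub_self, abs_zero, abs_one]
  nlinarith [abs_nonneg (c - 1)]

lemma one_lt_sub_div {n k : ℝ} (hk : 0 < k) (hkn : 2 * k < n) : 1 < (n - k) / k := by
  rw [one_lt_div hk]
  linarith

lemma two_mul_add_one_div_sub_one_mul_half_sub {n k : ℝ} (hk : 0 < k) (hkn : 2 * k < n) :
    2 * ((n - k) / k + 1) / ((n - k) / k - 1) * (n / 2 - k) = n := by
  have hadd : (n - k) / k + 1 = n / k := by field_simp; ring
  have hsub : (n - k) / k - 1 = 2 * (n / 2 - k) / k := by field_simp; ring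
  have : n - 2 * k ≠ 0 := by linarith
  rw [hadd, hsub]
  field_simp

lemma two_mul_add_one_div_sub_one_lt {C C' : ℝ} (h1 : 1 < C') (h : C' < C) :
    2 * (C + 1) / (C - 1) < 2 * (C' + 1) / (C' - 1) := by
  rw [div_lt_div_iff₀ (by linarith) (by linarith)]
  nlinarith

theorem stmt_1_general {m n : ℕ} (hne : Even n)
    (k : ℕ) (hk1 : 1 ≤ k) (hk2 : k < n / 2)
    (A : Matrix (Fin m) (Fin n) ℝ)
    -- the null space of `A` equals the span of the all-ones vector
    (hnull : ∀ w : Fin n → ℝ, A.mulVec w = 0 ↔ ∃ c : ℝ, w = fun _ => c)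
    (C' : ℝ) (hC' : C' = ((n : ℝ) - k) / k)
    (K : Finset (Fin n)) (hK : K = Finset.univ.filter (fun i : Fin n => (i : ℕ) < k))
    (x : Fin n → ℝ) (hx : x = fun i : Fin n => if (i : ℕ) < n / 2 then (-1:ℝ) else 0)
    (xh : Fin n → ℝ) (hxh : xh = fun i : Fin n => if (i : ℕ) < n / 2 then (0:ℝ) else 1) :
    -- (i) `xh` is an ℓ1 minimizer for (A, x)
    (A.mulVec xh = A.mulVec x ∧
      ∀ z : Fin n → ℝ, A.mulVec z = A.mulVec x → l1 xh ≤ l1 z) ∧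
    -- (ii) the all-ones null space vector tightly violates the balancedness condition
    (C' * l1 (restr K (fun _ => 1)) = l1 (restr Kᶜ (fun _ => 1)) ∧
      ∀ C : ℝ, C' < C →
        ¬ (C * l1 (restr K (fun _ => 1)) ≤ l1 (restr Kᶜ (fun _ => 1)))) ∧
    -- (iii) the recovery error bound is tightly violated
    (l1 (x - xh) = (2 * (C' + 1) / (C' - 1)) * l1 (restr Kᶜ x) ∧
      ∀ C : ℝ, C' < C →
        l1 (x - xh) > (2 * (C + 1) / (C - 1)) * l1 (restr Kᶜ x)) := by
  obtain ⟨h, hnh⟩ := hne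
  have hh : n / 2 = h := by omega
  rw [hh] at hk2 hx hxh
  have hk : (0 : ℝ) < k := by exact_mod_cast hk1
  have hkn : 2 * (k : ℝ) < n := by exact_mod_cast (by omega : 2 * k < n)
  have hxh_eq : xh = x + fun _ => 1 := by
    rw [hxh, hx]; ext i; split_ifs <;> simp [*]
  have hcardK : #K = k := hK ▸ card_filter_val_lt_of_le (by omega)
  have hK_one : l1 (restr K fun _ => 1) = k := by simp [l1_restr_const, hcardK]
  have hKc_one : l1 (restr Kᶜ fun _ => 1) = n - k := by
    simp [l1_restr_const, card_compl, hcardK, Nat.cast_sub (by omega : k ≤ n)]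
  have hKc_x : l1 (restr Kᶜ x) = n / 2 - k := by
    rw [hK, hx, l1_restr_compl_ite_val_lt hk2.le (by omega), hnh]; push_cast; ring
  have hsharp : l1 (x - xh) = 2 * (C' + 1) / (C' - 1) * l1 (restr Kᶜ x) := by
    rw [hKc_x, hC', two_mul_add_one_div_sub_one_mul_half_sub hk hkn, hxh_eq, sub_add_cancel_left]
    simp [Pi.neg_def, l1_const]
  refine ⟨hxh_eq ▸ isL1Minimizer_add_const hnull 1 ?_, ⟨?_, fun C hC => ?_⟩, hsharp,
    fun C hC => ?_⟩
  · exact hx ▸ l1_add_one_le_l1_add_const (by omega) (by omega)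
  · rw [hK_one, hKc_one, hC', div_mul_cancel₀ _ hk.ne']
  · rw [hK_one, hKc_one, not_le]
    exact (div_lt_iff₀ hk).1 (hC' ▸ hC)
  · rw [hsharp, gt_iff_lt]
    refine mul_lt_mul_of_pos_right (two_mul_add_one_div_sub_one_lt ?_ hC) (by linarith)
    exact hC' ▸ one_lt_sub_div hk hkn

theorem stmt_1 {m n : ℕ} (hn4 : 4 ≤ n) (hne : Even n)
    (k : ℕ) (hk1 : 1 ≤ k) (hk2 : k < n / 2)
    (A : Matrix (Fin m) (Fin n) ℝ)
    -- the null space of `A` equals the span of the all-ones vector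
    (hnull : ∀ w : Fin n → ℝ, A.mulVec w = 0 ↔ ∃ c : ℝ, w = fun _ => c)
    (C' : ℝ) (hC' : C' = ((n : ℝ) - k) / k)
    (K : Finset (Fin n)) (hK : K = Finset.univ.filter (fun i : Fin n => (i : ℕ) < k))
    (x : Fin n → ℝ) (hx : x = fun i : Fin n => if (i : ℕ) < n / 2 then (-1:ℝ) else 0)
    (xh : Fin n → ℝ) (hxh : xh = fun i : Fin n => if (i : ℕ) < n / 2 then (0:ℝ) else 1) :
    -- (i) `xh` is an ℓ1 minimizer for (A, x)
    (A.mulVec xh = A.mulVec x ∧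
      ∀ z : Fin n → ℝ, A.mulVec z = A.mulVec x → l1 xh ≤ l1 z) ∧
    -- (ii) the all-ones null space vector tightly violates the balancedness condition
    (C' * l1 (restr K (fun _ => 1)) = l1 (restr Kᶜ (fun _ => 1)) ∧
      ∀ C : ℝ, C' < C →
        ¬ (C * l1 (restr K (fun _ => 1)) ≤ l1 (restr Kᶜ (fun _ => 1)))) ∧
    -- (iii) the recovery error bound is tightly violated
    (l1 (x - xh) = (2 * (C' + 1) / (C' - 1)) * l1 (restr Kᶜ x) ∧
      ∀ C : ℝ, C' < C →
        l1 (x - xh) > (2 * (C + 1) / (C - 1)) * l1 (restr Kᶜ x)) :=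
  stmt_1_general hne k hk1 hk2 A hnull C' hC' K hK x hx xh hxh
end

section
/- (Weak robustness.) Let A be an m×n real matrix, K ⊆ {1,…,n}, C > 1, and x ∈ ℝⁿ. Suppose that for every w ∈ ℝⁿ with Aw = 0 one has ‖x_K + w_K‖₁ + (1/C)·‖w_K̄‖₁ ≥ ‖x_K‖₁. Then every ℓ1 minimizer x̂ for (A, x) satisfies both ‖x_K‖₁ − ‖x̂_K‖₁ ≤ (2/(C−1))·‖x_K̄‖₁ and ‖(x − x̂)_K̄‖₁ ≤ (2C/(C−1))·‖x_K̄‖₁. -/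
section L1

variable {n : ℕ}

lemma l1_sub_le (a b : Fin n → ℝ) : l1 (a - b) ≤ l1 a + l1 b := by
  unfold l1
  rw [← Finset.sum_add_distrib]
  exact Finset.sum_le_sum fun i _ => abs_sub _ _

lemma l1_sub_comm (a b : Fin n → ℝ) : l1 (a - b) = l1 (b - a) := by
  simp only [l1, Pi.sub_apply, abs_sub_comm]

lemma l1_eq_l1_restr_add_l1_restr_compl (K : Finset (Fin n)) (z : Fin n → ℝ) :
    l1 z = l1 (restr K z) + l1 (restr Kᶜ z) := by
  unfold l1 restr
  rw [← Finset.sum_add_distrib]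
  refine Finset.sum_congr rfl fun i _ => ?_
  by_cases h : i ∈ K <;> simp [h]

lemma restr_add (K : Finset (Fin n)) (a b : Fin n → ℝ) :
    restr K (a + b) = restr K a + restr K b := by
  funext i
  by_cases h : i ∈ K <;> simp [restr, h]

lemma restr_sub (K : Finset (Fin n)) (a b : Fin n → ℝ) :
    restr K (a - b) = restr K a - restr K b := by
  funext i
  by_cases h : i ∈ K <;> simp [restr, h]

end L1

lemma robustness_bounds_of_le {C a b c d e : ℝ} (hC : 1 < C) (hnull : a ≤ b + 1 / C * e)
    (hmin : b + d ≤ a + c) (htri : e ≤ d + c) :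
    a - b ≤ 2 / (C - 1) * c ∧ e ≤ 2 * C / (C - 1) * c := by
  have hC0 : 0 < C := by linarith
  have hC1 : 0 < C - 1 := by linarith
  have hCab : C * (a - b) ≤ e := by
    have := mul_le_mul_of_nonneg_left (show a - b ≤ 1 / C * e by linarith) hC0.le
    rwa [← mul_assoc, mul_one_div_cancel hC0.ne', one_mul] at this
  have he : (C - 1) * e ≤ 2 * C * c := by nlinarith
  constructor
  · rw [div_mul_eq_mul_div, le_div_iff₀ hC1]
    nlinarith
  · rw [div_mul_eq_mul_div, le_div_iff₀ hC1]
    linarith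

theorem stmt_4 {m n : ℕ} (A : Matrix (Fin m) (Fin n) ℝ)
    (K : Finset (Fin n)) (C : ℝ) (hC : 1 < C) (x : Fin n → ℝ)
    (hcond : ∀ w : Fin n → ℝ, A.mulVec w = 0 →
      l1 (restr K x + restr K w) + (1 / C) * l1 (restr Kᶜ w) ≥ l1 (restr K x)) :
    ∀ xh : Fin n → ℝ, A.mulVec xh = A.mulVec x →
      (∀ z : Fin n → ℝ, A.mulVec z = A.mulVec x → l1 xh ≤ l1 z) →
      l1 (restr K x) - l1 (restr K xh) ≤ (2 / (C - 1)) * l1 (restr Kᶜ x) ∧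
      l1 (restr Kᶜ (x - xh)) ≤ (2 * C / (C - 1)) * l1 (restr Kᶜ x) := by
  intro xh hAxh hmin
  have hnull : l1 (restr K x) ≤ l1 (restr K xh) + 1 / C * l1 (restr Kᶜ (x - xh)) := by
    have := hcond (xh - x) (by rw [Matrix.mulVec_sub, hAxh, sub_self])
    rwa [← restr_add, add_sub_cancel, restr_sub, l1_sub_comm, ← restr_sub] at this
  have hminK : l1 (restr K xh) + l1 (restr Kᶜ xh) ≤ l1 (restr K x) + l1 (restr Kᶜ x) := by
    rw [← l1_eq_l1_restr_add_l1_restr_compl, ← l1_eq_l1_restr_add_l1_restr_compl]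
    exact hmin x rfl
  have htri : l1 (restr Kᶜ (x - xh)) ≤ l1 (restr Kᶜ xh) + l1 (restr Kᶜ x) := by
    rw [restr_sub, add_comm]
    exact l1_sub_le _ _
  exact robustness_bounds_of_le hC hnull hminK htri
end
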